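/- Explicit six-dimensional counterexample. On ℝ⁶ with the Euclidean metric, let W_{abcd} be the tensor field whose only nonvanishing components are those determined from W_{1245} = W_{1425} = sin(x₃)·sin(x₆) by the symmetries W_{abcd} = −W_{bacd} = −W_{abdc} = W_{cdab}. Then W is a Weyl candidate (it satisfies W_{abcd} = W_{[ab]cd} = W_{ab[cd]}, W_{abcd} = W_{cdab}, W_{a[bcd]} = 0 and W^a_{bad} = 0), but it fails constraint (8): the (a,b,f;c,d,e) = (1,2,3;4,5,6) component of the difference of the two sides of (8) is a nonzero constant multiple of cos(x₃)·cos(x₆), which is not identically zero. -/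
import Mathlib


open scoped ContDiff

noncomputable section

/-- Partial derivative `∂ᵢ f` of a scalar field on flat `ℝⁿ` (points represented as
`Fin n → ℝ`, standard coordinates) in the `i`-th coordinate direction.  In Cartesian
coordinates on flat space this is the covariant derivative `;i`. -/
def pd {n : ℕ} (i : Fin n) (f : (Fin n → ℝ) → ℝ) : (Fin n → ℝ) → ℝ :=
  fun x => fderiv ℝ f x (Pi.single i 1)

/-- Components `η_{ab}` of the constant diagonal metric with diagonal entries `η a = ±1`;
since the entries are `±1` these coincide with the components `η^{ab}` of the inverse
metric. -/
def gm {n : ℕ} (η : Fin n → ℝ) (a b : Fin n) : ℝ := if a = b then η a else 0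

/-- Antisymmetrization over two index slots. -/
def asym2 {n : ℕ} (T : Fin n → Fin n → ℝ) (a b : Fin n) : ℝ := (T a b - T b a) / 2

/-- Antisymmetrization over three index slots. -/
def asym3 {n : ℕ} (T : Fin n → Fin n → Fin n → ℝ) (a b c : Fin n) : ℝ :=
  (T a b c - T a c b - T b a c + T b c a + T c a b - T c b a) / 6

/-- Simultaneous antisymmetrization over a pair of upper slots and a pair of lower slots. -/
def asym22 {n : ℕ} (T : Fin n → Fin n → Fin n → Fin n → ℝ) (a b c d : Fin n) : ℝ :=
  (T a b c d - T b a c d - T a b d c + T b a d c) / 4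

/-- Simultaneous antisymmetrization over a triple of upper slots and a triple of lower
slots (arguments ordered as `T upper₁ upper₂ upper₃ lower₁ lower₂ lower₃`). -/
def asym33 {n : ℕ} (T : Fin n → Fin n → Fin n → Fin n → Fin n → Fin n → ℝ)
    (a b f c d e : Fin n) : ℝ :=
  asym3 (fun a b f => asym3 (fun c d e => T a b f c d e) c d e) a b f

/-- A Weyl candidate: a 4-tensor field with the index symmetries (3a)–(3d):
antisymmetry in the first and in the second index pair, symmetry under interchange of the
two pairs, vanishing cyclic sum `W_{a[bcd]} = 0`, and vanishing trace `W^a{}_{bad} = 0`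
(the trace being taken with the metric `η`). -/
def WeylCandidate {n : ℕ} (η : Fin n → ℝ)
    (W : (Fin n → ℝ) → Fin n → Fin n → Fin n → Fin n → ℝ) : Prop :=
  (∀ x a b c d, W x a b c d = - W x b a c d) ∧
  (∀ x a b c d, W x a b c d = - W x a b d c) ∧
  (∀ x a b c d, W x a b c d = W x c d a b) ∧
  (∀ x a b c d, asym3 (fun b c d => W x a b c d) b c d = 0) ∧
  (∀ x b d, ∑ a, η a * W x a b a d = 0)

/-- The right-hand side of the Lanczos potential equation (4), in the equivalent fully
lowered form (the free indices `a b`, raised in the paper, are lowered with the invertible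
diagonal metric `η`, which only multiplies each component equation by `η a * η b ≠ 0`).
Each contracted (dummy) index pair carries a factor `η i` coming from the inverse
metric. -/
def rhs4 {n : ℕ} (η : Fin n → ℝ) (L : (Fin n → ℝ) → Fin n → Fin n → Fin n → ℝ)
    (x : Fin n → ℝ) (a b c d : Fin n) : ℝ :=
  -- 2 L^{ab}{}_{[c;d]}
  (pd d (L · a b c) x - pd c (L · a b d) x)
  -- + 2 L_{cd}{}^{[a;b]}
  + (pd b (L · c d a) x - pd a (L · c d b) x)
  -- − (4/(n−2)) δ^{[a}_{[c} ( L^{b]i}{}_{d];i} − L^{b]i}{}_{|i|;d]} + L_{d]i}{}^{b];i} − L_{d]i}{}^{|i|;b]} )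
  - (4 / ((n : ℝ) - 2)) *
      asym22 (fun a b c d =>
        gm η a c *
          ∑ i, η i *
            (pd i (L · b i d) x - pd d (L · b i i) x
              + pd i (L · d i b) x - pd b (L · d i i) x)) a b c d
  -- + (8/((n−2)(n−1))) δ^{a}_{[c} δ^{b}_{d]} L^{ij}{}_{i;j}
  + (8 / (((n : ℝ) - 2) * ((n : ℝ) - 1))) *
      ((gm η a c * gm η b d - gm η a d * gm η b c) / 2) *
      ∑ i, ∑ j, η i * η j * pd j (L · i j i) x

/-- Equation (4): `L` is a Lanczos potential for `W` (fully lowered, equivalent form). -/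
def Eq4 {n : ℕ} (η : Fin n → ℝ)
    (W : (Fin n → ℝ) → Fin n → Fin n → Fin n → Fin n → ℝ)
    (L : (Fin n → ℝ) → Fin n → Fin n → Fin n → ℝ) : Prop :=
  ∀ x a b c d, W x a b c d = rhs4 η L x a b c d

/-- The right-hand side of equation (5) (equation (4) in the Lanczos algebraic gauge
`L_{ab}{}^b = 0`), fully lowered form:
`2 L^{ab}{}_{[c;d]} + 2 L_{cd}{}^{[a;b]} − (4/(n−2)) δ^{[a}_{[c} ( L^{b]i}{}_{d];i} + L_{d]i}{}^{b];i} )`. -/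
def rhs5 {n : ℕ} (η : Fin n → ℝ) (L : (Fin n → ℝ) → Fin n → Fin n → Fin n → ℝ)
    (x : Fin n → ℝ) (a b c d : Fin n) : ℝ :=
  (pd d (L · a b c) x - pd c (L · a b d) x)
  + (pd b (L · c d a) x - pd a (L · c d b) x)
  - (4 / ((n : ℝ) - 2)) *
      asym22 (fun a b c d =>
        gm η a c * ∑ i, η i * (pd i (L · b i d) x + pd i (L · d i b) x)) a b c d

/-- Equation (5). -/
def Eq5 {n : ℕ} (η : Fin n → ℝ)
    (W : (Fin n → ℝ) → Fin n → Fin n → Fin n → Fin n → ℝ)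
    (L : (Fin n → ℝ) → Fin n → Fin n → Fin n → ℝ) : Prop :=
  ∀ x a b c d, W x a b c d = rhs5 η L x a b c d

/-- Constraint (8), fully lowered form:
`W^{[ab}{}_{[cd;e]}{}^{f]} = (1/(n−4)) δ^{[a}_{[c} W^{bf]}{}_{de];i}{}^{i}
 + (2/(n−4)) δ^{[a}_{[c} W^{|i|b}{}_{de];i}{}^{f]} + (2/(n−4)) δ^{[a}_{[c} W^{bf]}{}_{|i|d;e]}{}^{i}
 + (4/((n−3)(n−4))) δ^{[a}_{[c} δ^{b}_{d} W^{f]i}{}_{e]j;i}{}^{j}`. -/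
def Constraint8 {n : ℕ} (η : Fin n → ℝ)
    (W : (Fin n → ℝ) → Fin n → Fin n → Fin n → Fin n → ℝ) : Prop :=
  ∀ x a b f c d e,
    asym33 (fun a b f c d e => pd f (pd e (W · a b c d)) x) a b f c d e =
      (1 / ((n : ℝ) - 4)) *
          asym33 (fun a b f c d e =>
            gm η a c * ∑ i, η i * pd i (pd i (W · b f d e)) x) a b f c d e
      + (2 / ((n : ℝ) - 4)) *
          asym33 (fun a b f c d e =>
            gm η a c * ∑ i, η i * pd f (pd i (W · i b d e)) x) a b f c d e
      + (2 / ((n : ℝ) - 4)) *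
          asym33 (fun a b f c d e =>
            gm η a c * ∑ i, η i * pd i (pd e (W · b f i d)) x) a b f c d e
      + (4 / (((n : ℝ) - 3) * ((n : ℝ) - 4))) *
          asym33 (fun a b f c d e =>
            gm η a c * gm η b d *
              ∑ i, ∑ j, η i * η j * pd j (pd i (W · f i e j)) x) a b f c d e

/-- Constraint (10), fully lowered form:
`W^{[ab}{}_{cd;i}{}^{|i|e]} + 2 W^{[ab}{}_{i[c;d]}{}^{|i|e]}
 + (4/(n−3)) δ^{[a}_{[c} W^{b|i}{}_{d]j;i}{}^{j|e]} = 0`,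
antisymmetrized over the upper indices `a b e` and (where indicated) the lower indices
`c d`. -/
def Constraint10 {n : ℕ} (η : Fin n → ℝ)
    (W : (Fin n → ℝ) → Fin n → Fin n → Fin n → Fin n → ℝ) : Prop :=
  ∀ x a b e c d,
    asym3 (fun a b e =>
      (∑ i, η i * pd e (pd i (pd i (W · a b c d))) x)
      + 2 * asym2 (fun c d =>
            ∑ i, η i * pd e (pd i (pd d (W · a b i c))) x) c d
      + (4 / ((n : ℝ) - 3)) * asym2 (fun c d =>
            gm η a c *
              ∑ i, ∑ j, η i * η j * pd e (pd j (pd i (W · b i d j))) x) c d) a b e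
    = 0

/-- `pairA p q a b` equals `1` if `(a,b) = (p,q)`, `-1` if `(a,b) = (q,p)` and `0`
otherwise: the components of the antisymmetric "unit bivector" on the index pair
`{p,q}`. -/
def pairA {n : ℕ} (p q a b : Fin n) : ℝ :=
  if a = p ∧ b = q then 1 else if a = q ∧ b = p then -1 else 0

/-- The explicit six-dimensional counterexample (coordinates and indices `1,…,6` of the
paper are `0,…,5` here): the only nonvanishing components are determined from
`W_{1245} = W_{1425} = sin x₃ · sin x₆` by the symmetries
`W_{abcd} = −W_{bacd} = −W_{abdc} = W_{cdab}`. -/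
def W6 (x : Fin 6 → ℝ) (a b c d : Fin 6) : ℝ :=
  Real.sin (x 2) * Real.sin (x 5) *
    (pairA 0 1 a b * pairA 3 4 c d + pairA 3 4 a b * pairA 0 1 c d
      + pairA 0 3 a b * pairA 1 4 c d + pairA 1 4 a b * pairA 0 3 c d)

/-- The Euclidean metric on `ℝ⁶`. -/
def η6 : Fin 6 → ℝ := fun _ => 1

/-- The `(a,b,f;c,d,e)` component of (left-hand side − right-hand side) of constraint (8)
for `n = 6` (coefficients `1/2, 1, 1, 2/3`), for the tensor field `W6`. -/
def diff8 (x : Fin 6 → ℝ) (a b f c d e : Fin 6) : ℝ :=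
  asym33 (fun a b f c d e => pd f (pd e (W6 · a b c d)) x) a b f c d e
  - ((1 / 2) *
        asym33 (fun a b f c d e =>
          gm η6 a c * ∑ i, η6 i * pd i (pd i (W6 · b f d e)) x) a b f c d e
      + 1 *
        asym33 (fun a b f c d e =>
          gm η6 a c * ∑ i, η6 i * pd f (pd i (W6 · i b d e)) x) a b f c d e
      + 1 *
        asym33 (fun a b f c d e =>
          gm η6 a c * ∑ i, η6 i * pd i (pd e (W6 · b f i d)) x) a b f c d e
      + (2 / 3) *
        asym33 (fun a b f c d e =>
          gm η6 a c * gm η6 b d *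
            ∑ i, ∑ j, η6 i * η6 j * pd j (pd i (W6 · f i e j)) x) a b f c d e)


/-! ### Auxiliary machinery for the proof -/

/-- Integer version of `pairA`. -/
def pairAz (p q a b : Fin 6) : ℤ :=
  if a = p ∧ b = q then 1 else if a = q ∧ b = p then -1 else 0

/-- Integer-valued constant coefficient tensor of `W6`. -/
def Cz (a b c d : Fin 6) : ℤ :=
  pairAz 0 1 a b * pairAz 3 4 c d + pairAz 3 4 a b * pairAz 0 1 c d
    + pairAz 0 3 a b * pairAz 1 4 c d + pairAz 1 4 a b * pairAz 0 3 c d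

lemma pairA_eq (p q a b : Fin 6) : pairA p q a b = ((pairAz p q a b : ℤ) : ℝ) := by
  unfold pairA pairAz; split_ifs <;> simp

lemma W6_eq (x : Fin 6 → ℝ) (a b c d : Fin 6) :
    W6 x a b c d = Real.sin (x 2) * Real.sin (x 5) * ((Cz a b c d : ℤ) : ℝ) := by
  unfold W6 Cz
  simp only [pairA_eq]
  push_cast
  ring

lemma Cz_antisym1 : ∀ a b c d : Fin 6, Cz a b c d = - Cz b a c d := by decide
lemma Cz_antisym2 : ∀ a b c d : Fin 6, Cz a b c d = - Cz a b d c := by decide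
lemma Cz_pairsym : ∀ a b c d : Fin 6, Cz a b c d = Cz c d a b := by decide
lemma Cz_cyclic : ∀ a b c d : Fin 6,
    Cz a b c d - Cz a b d c - Cz a c b d + Cz a c d b + Cz a d b c - Cz a d c b = 0 := by decide
lemma Cz_trace : ∀ b d : Fin 6, ∑ a, Cz a b a d = 0 := by decide

lemma hasfd_fg (f g f' g' : ℝ → ℝ) (hf : ∀ t, HasDerivAt f (f' t) t)
    (hg : ∀ t, HasDerivAt g (g' t) t) (k : ℝ) (x : Fin 6 → ℝ) :
    HasFDerivAt (fun y : Fin 6 → ℝ => f (y 2) * g (y 5) * k)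
      (k • (f (x 2) • (g' (x 5) • ContinuousLinearMap.proj 5)
        + g (x 5) • (f' (x 2) • ContinuousLinearMap.proj (R := ℝ) (φ := fun _ : Fin 6 => ℝ) 2))) x := by
  have p2 := (ContinuousLinearMap.proj (R := ℝ) (φ := fun _ : Fin 6 => ℝ) 2).hasFDerivAt (x := x)
  have p5 := (ContinuousLinearMap.proj (R := ℝ) (φ := fun _ : Fin 6 => ℝ) 5).hasFDerivAt (x := x)
  have h1 := (hf (x 2)).comp_hasFDerivAt x p2
  have h2 := (hg (x 5)).comp_hasFDerivAt x p5
  exact (h1.mul h2).mul_const k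

lemma pd_fgk (f g f' g' : ℝ → ℝ) (hf : ∀ t, HasDerivAt f (f' t) t)
    (hg : ∀ t, HasDerivAt g (g' t) t) (k : ℝ) (i : Fin 6) (x : Fin 6 → ℝ) :
    pd i (fun y => f (y 2) * g (y 5) * k) x =
      ((if i = 2 then f' (x 2) * g (x 5) else 0)
        + (if i = 5 then f (x 2) * g' (x 5) else 0)) * k := by
  unfold pd
  rw [(hasfd_fg f g f' g' hf hg k x).fderiv]
  simp only [ContinuousLinearMap.smul_apply, ContinuousLinearMap.add_apply,
    ContinuousLinearMap.proj_apply, Pi.single_apply, smul_eq_mul]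
  fin_cases i <;> simp <;> ring

lemma pd_zero (j : Fin 6) (x : Fin 6 → ℝ) : pd j (fun _ => (0:ℝ)) x = 0 := by
  simp [pd]

/-- `sin sin` coefficient of the second partial of `sin (x 2) * sin (x 5)`. -/
def du (i j : Fin 6) : ℝ := if (i = 2 ∧ j = 2) ∨ (i = 5 ∧ j = 5) then -1 else 0

/-- `cos cos` coefficient of the second partial of `sin (x 2) * sin (x 5)`. -/
def dv (i j : Fin 6) : ℝ := if (i = 2 ∧ j = 5) ∨ (i = 5 ∧ j = 2) then 1 else 0

lemma pdpd_uk (k : ℝ) (e f : Fin 6) (x : Fin 6 → ℝ) :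
    pd f (pd e (fun y => Real.sin (y 2) * Real.sin (y 5) * k)) x
      = (du e f * (Real.sin (x 2) * Real.sin (x 5))
          + dv e f * (Real.cos (x 2) * Real.cos (x 5))) * k := by
  have h1 : pd e (fun y => Real.sin (y 2) * Real.sin (y 5) * k)
      = fun y => ((if e = 2 then Real.cos (y 2) * Real.sin (y 5) else 0)
          + (if e = 5 then Real.sin (y 2) * Real.cos (y 5) else 0)) * k := by
    funext y
    exact pd_fgk _ _ _ _ (fun t => Real.hasDerivAt_sin t) (fun t => Real.hasDerivAt_sin t) k e y
  rw [h1]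
  by_cases he2 : e = 2
  · subst he2
    have h2 : (fun y : Fin 6 → ℝ =>
        ((if (2:Fin 6) = 2 then Real.cos (y 2) * Real.sin (y 5) else 0)
          + (if (2:Fin 6) = 5 then Real.sin (y 2) * Real.cos (y 5) else 0)) * k)
        = fun y => Real.cos (y 2) * Real.sin (y 5) * k := by
      funext y; rw [if_pos rfl, if_neg (by decide)]; ring
    rw [h2, pd_fgk Real.cos Real.sin (fun t => -Real.sin t) Real.cos
      (fun t => Real.hasDerivAt_cos t) (fun t => Real.hasDerivAt_sin t) k f x]
    fin_cases f <;> simp [du, dv] <;> ring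
  · by_cases he5 : e = 5
    · subst he5
      have h2 : (fun y : Fin 6 → ℝ =>
          ((if (5:Fin 6) = 2 then Real.cos (y 2) * Real.sin (y 5) else 0)
            + (if (5:Fin 6) = 5 then Real.sin (y 2) * Real.cos (y 5) else 0)) * k)
          = fun y => Real.sin (y 2) * Real.cos (y 5) * k := by
        funext y; rw [if_neg (by decide), if_pos rfl]; ring
      rw [h2, pd_fgk Real.sin Real.cos Real.cos (fun t => -Real.sin t)
        (fun t => Real.hasDerivAt_sin t) (fun t => Real.hasDerivAt_cos t) k f x]
      fin_cases f <;> simp [du, dv] <;> ring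
    · have h2 : (fun y : Fin 6 → ℝ =>
          ((if e = 2 then Real.cos (y 2) * Real.sin (y 5) else 0)
            + (if e = 5 then Real.sin (y 2) * Real.cos (y 5) else 0)) * k)
          = fun _ => (0:ℝ) := by
        funext y; simp [he2, he5]
      rw [h2, pd_zero]
      simp [du, dv, he2, he5]

lemma pdpdW6 (a b c d e f : Fin 6) (x : Fin 6 → ℝ) :
    pd f (pd e (fun y => W6 y a b c d)) x
      = (du e f * (Real.sin (x 2) * Real.sin (x 5))
          + dv e f * (Real.cos (x 2) * Real.cos (x 5))) * ((Cz a b c d : ℤ) : ℝ) := by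
  have h : (fun y => W6 y a b c d)
      = fun y => Real.sin (y 2) * Real.sin (y 5) * ((Cz a b c d : ℤ) : ℝ) := by
    funext y; exact W6_eq y a b c d
  rw [h, pdpd_uk]

lemma Czv0 : ((Cz 0 1 3 4 : ℤ) : ℝ) = 1 := by rw [show Cz 0 1 3 4 = 1 from by decide]; norm_num
lemma Czv1 : ((Cz 0 1 3 5 : ℤ) : ℝ) = 0 := by rw [show Cz 0 1 3 5 = 0 from by decide]; norm_num
lemma Czv2 : ((Cz 0 1 4 3 : ℤ) : ℝ) = -1 := by rw [show Cz 0 1 4 3 = -1 from by decide]; norm_num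
lemma Czv3 : ((Cz 0 1 4 5 : ℤ) : ℝ) = 0 := by rw [show Cz 0 1 4 5 = 0 from by decide]; norm_num
lemma Czv4 : ((Cz 0 1 5 3 : ℤ) : ℝ) = 0 := by rw [show Cz 0 1 5 3 = 0 from by decide]; norm_num
lemma Czv5 : ((Cz 0 1 5 4 : ℤ) : ℝ) = 0 := by rw [show Cz 0 1 5 4 = 0 from by decide]; norm_num
lemma Czv6 : ((Cz 0 2 3 4 : ℤ) : ℝ) = 0 := by rw [show Cz 0 2 3 4 = 0 from by decide]; norm_num
lemma Czv7 : ((Cz 0 2 3 5 : ℤ) : ℝ) = 0 := by rw [show Cz 0 2 3 5 = 0 from by decide]; norm_num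
lemma Czv8 : ((Cz 0 2 4 3 : ℤ) : ℝ) = 0 := by rw [show Cz 0 2 4 3 = 0 from by decide]; norm_num
lemma Czv9 : ((Cz 0 2 4 5 : ℤ) : ℝ) = 0 := by rw [show Cz 0 2 4 5 = 0 from by decide]; norm_num
lemma Czv10 : ((Cz 0 2 5 3 : ℤ) : ℝ) = 0 := by rw [show Cz 0 2 5 3 = 0 from by decide]; norm_num
lemma Czv11 : ((Cz 0 2 5 4 : ℤ) : ℝ) = 0 := by rw [show Cz 0 2 5 4 = 0 from by decide]; norm_num
lemma Czv12 : ((Cz 1 0 3 4 : ℤ) : ℝ) = -1 := by rw [show Cz 1 0 3 4 = -1 from by decide]; norm_num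
lemma Czv13 : ((Cz 1 0 3 5 : ℤ) : ℝ) = 0 := by rw [show Cz 1 0 3 5 = 0 from by decide]; norm_num
lemma Czv14 : ((Cz 1 0 4 3 : ℤ) : ℝ) = 1 := by rw [show Cz 1 0 4 3 = 1 from by decide]; norm_num
lemma Czv15 : ((Cz 1 0 4 5 : ℤ) : ℝ) = 0 := by rw [show Cz 1 0 4 5 = 0 from by decide]; norm_num
lemma Czv16 : ((Cz 1 0 5 3 : ℤ) : ℝ) = 0 := by rw [show Cz 1 0 5 3 = 0 from by decide]; norm_num
lemma Czv17 : ((Cz 1 0 5 4 : ℤ) : ℝ) = 0 := by rw [show Cz 1 0 5 4 = 0 from by decide]; norm_num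
lemma Czv18 : ((Cz 1 2 3 4 : ℤ) : ℝ) = 0 := by rw [show Cz 1 2 3 4 = 0 from by decide]; norm_num
lemma Czv19 : ((Cz 1 2 3 5 : ℤ) : ℝ) = 0 := by rw [show Cz 1 2 3 5 = 0 from by decide]; norm_num
lemma Czv20 : ((Cz 1 2 4 3 : ℤ) : ℝ) = 0 := by rw [show Cz 1 2 4 3 = 0 from by decide]; norm_num
lemma Czv21 : ((Cz 1 2 4 5 : ℤ) : ℝ) = 0 := by rw [show Cz 1 2 4 5 = 0 from by decide]; norm_num
lemma Czv22 : ((Cz 1 2 5 3 : ℤ) : ℝ) = 0 := by rw [show Cz 1 2 5 3 = 0 from by decide]; norm_num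
lemma Czv23 : ((Cz 1 2 5 4 : ℤ) : ℝ) = 0 := by rw [show Cz 1 2 5 4 = 0 from by decide]; norm_num
lemma Czv24 : ((Cz 2 0 3 4 : ℤ) : ℝ) = 0 := by rw [show Cz 2 0 3 4 = 0 from by decide]; norm_num
lemma Czv25 : ((Cz 2 0 3 5 : ℤ) : ℝ) = 0 := by rw [show Cz 2 0 3 5 = 0 from by decide]; norm_num
lemma Czv26 : ((Cz 2 0 4 3 : ℤ) : ℝ) = 0 := by rw [show Cz 2 0 4 3 = 0 from by decide]; norm_num
lemma Czv27 : ((Cz 2 0 4 5 : ℤ) : ℝ) = 0 := by rw [show Cz 2 0 4 5 = 0 from by decide]; norm_num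
lemma Czv28 : ((Cz 2 0 5 3 : ℤ) : ℝ) = 0 := by rw [show Cz 2 0 5 3 = 0 from by decide]; norm_num
lemma Czv29 : ((Cz 2 0 5 4 : ℤ) : ℝ) = 0 := by rw [show Cz 2 0 5 4 = 0 from by decide]; norm_num
lemma Czv30 : ((Cz 2 1 3 4 : ℤ) : ℝ) = 0 := by rw [show Cz 2 1 3 4 = 0 from by decide]; norm_num
lemma Czv31 : ((Cz 2 1 3 5 : ℤ) : ℝ) = 0 := by rw [show Cz 2 1 3 5 = 0 from by decide]; norm_num
lemma Czv32 : ((Cz 2 1 4 3 : ℤ) : ℝ) = 0 := by rw [show Cz 2 1 4 3 = 0 from by decide]; norm_num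
lemma Czv33 : ((Cz 2 1 4 5 : ℤ) : ℝ) = 0 := by rw [show Cz 2 1 4 5 = 0 from by decide]; norm_num
lemma Czv34 : ((Cz 2 1 5 3 : ℤ) : ℝ) = 0 := by rw [show Cz 2 1 5 3 = 0 from by decide]; norm_num
lemma Czv35 : ((Cz 2 1 5 4 : ℤ) : ℝ) = 0 := by rw [show Cz 2 1 5 4 = 0 from by decide]; norm_num
lemma duv30 : du 3 0 = 0 := by unfold du; rw [if_neg (by decide)]
lemma dvv30 : dv 3 0 = 0 := by unfold dv; rw [if_neg (by decide)]
lemma duv31 : du 3 1 = 0 := by unfold du; rw [if_neg (by decide)]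
lemma dvv31 : dv 3 1 = 0 := by unfold dv; rw [if_neg (by decide)]
lemma duv32 : du 3 2 = 0 := by unfold du; rw [if_neg (by decide)]
lemma dvv32 : dv 3 2 = 0 := by unfold dv; rw [if_neg (by decide)]
lemma duv40 : du 4 0 = 0 := by unfold du; rw [if_neg (by decide)]
lemma dvv40 : dv 4 0 = 0 := by unfold dv; rw [if_neg (by decide)]
lemma duv41 : du 4 1 = 0 := by unfold du; rw [if_neg (by decide)]
lemma dvv41 : dv 4 1 = 0 := by unfold dv; rw [if_neg (by decide)]
lemma duv42 : du 4 2 = 0 := by unfold du; rw [if_neg (by decide)]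
lemma dvv42 : dv 4 2 = 0 := by unfold dv; rw [if_neg (by decide)]
lemma duv50 : du 5 0 = 0 := by unfold du; rw [if_neg (by decide)]
lemma dvv50 : dv 5 0 = 0 := by unfold dv; rw [if_neg (by decide)]
lemma duv51 : du 5 1 = 0 := by unfold du; rw [if_neg (by decide)]
lemma dvv51 : dv 5 1 = 0 := by unfold dv; rw [if_neg (by decide)]
lemma duv52 : du 5 2 = 0 := by unfold du; rw [if_neg (by decide)]
lemma dvv52 : dv 5 2 = 1 := by unfold dv; rw [if_pos (by decide)]
lemma gmv03 : gm η6 0 3 = 0 := by unfold gm; rw [if_neg (by decide)]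
lemma gmv04 : gm η6 0 4 = 0 := by unfold gm; rw [if_neg (by decide)]
lemma gmv05 : gm η6 0 5 = 0 := by unfold gm; rw [if_neg (by decide)]
lemma gmv13 : gm η6 1 3 = 0 := by unfold gm; rw [if_neg (by decide)]
lemma gmv14 : gm η6 1 4 = 0 := by unfold gm; rw [if_neg (by decide)]
lemma gmv15 : gm η6 1 5 = 0 := by unfold gm; rw [if_neg (by decide)]
lemma gmv23 : gm η6 2 3 = 0 := by unfold gm; rw [if_neg (by decide)]
lemma gmv24 : gm η6 2 4 = 0 := by unfold gm; rw [if_neg (by decide)]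
lemma gmv25 : gm η6 2 5 = 0 := by unfold gm; rw [if_neg (by decide)]

set_option maxHeartbeats 2000000 in
lemma diff8_val (x : Fin 6 → ℝ) :
    diff8 x 0 1 2 3 4 5 = (1/9) * (Real.cos (x 2) * Real.cos (x 5)) := by
  simp only [diff8, asym33, asym3]
  simp only [gmv03, gmv04, gmv05, gmv13, gmv14, gmv15, gmv23, gmv24, gmv25, zero_mul, mul_zero]
  simp only [pdpdW6]
  simp only [Czv0, Czv1, Czv2, Czv3, Czv4, Czv5, Czv6, Czv7, Czv8, Czv9, Czv10, Czv11, Czv12, Czv13, Czv14, Czv15, Czv16, Czv17, Czv18, Czv19, Czv20, Czv21, Czv22, Czv23, Czv24, Czv25, Czv26, Czv27, Czv28, Czv29, Czv30, Czv31, Czv32, Czv33, Czv34, Czv35, duv30, dvv30, duv31, dvv31, duv32, dvv32, duv40, dvv40, duv41, dvv41, duv42, dvv42, duv50, dvv50, duv51, dvv51, duv52, dvv52]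
  ring

/-- **Explicit six-dimensional counterexample.**  On Euclidean `ℝ⁶` the tensor field `W6`
is a Weyl candidate, but its `(a,b,f;c,d,e) = (1,2,3;4,5,6)` component of the difference
of the two sides of constraint (8) is a nonzero constant multiple of
`cos x₃ · cos x₆`, hence not identically zero; so `W6` fails constraint (8). -/
theorem six_dimensional_counterexample :
    WeylCandidate η6 W6 ∧
    (∃ c : ℝ, c ≠ 0 ∧
        ∀ x, diff8 x 0 1 2 3 4 5 = c * (Real.cos (x 2) * Real.cos (x 5))) ∧
    (∃ x, diff8 x 0 1 2 3 4 5 ≠ 0) := by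
  refine ⟨⟨?_, ?_, ?_, ?_, ?_⟩, ⟨1/9, by norm_num, fun x => diff8_val x⟩,
    ⟨fun _ => 0, ?_⟩⟩
  · intro x a b c d
    rw [W6_eq, W6_eq, Cz_antisym1 a b c d]
    push_cast; ring
  · intro x a b c d
    rw [W6_eq, W6_eq, Cz_antisym2 a b c d]
    push_cast; ring
  · intro x a b c d
    rw [W6_eq, W6_eq, Cz_pairsym a b c d]
  · intro x a b c d
    unfold asym3
    simp only [W6_eq]
    have h : ((Cz a b c d : ℤ) : ℝ) - ((Cz a b d c : ℤ) : ℝ) - ((Cz a c b d : ℤ) : ℝ)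
        + ((Cz a c d b : ℤ) : ℝ) + ((Cz a d b c : ℤ) : ℝ) - ((Cz a d c b : ℤ) : ℝ) = 0 := by
      exact_mod_cast Cz_cyclic a b c d
    linear_combination (Real.sin (x 2) * Real.sin (x 5) / 6) * h
  · intro x b d
    simp only [η6, one_mul, W6_eq]
    rw [← Finset.mul_sum]
    have h : ∑ a : Fin 6, ((Cz a b a d : ℤ) : ℝ) = 0 := by
      exact_mod_cast congrArg (fun z : ℤ => (z : ℝ)) (Cz_trace b d)
    rw [h, mul_zero]
  · rw [diff8_val]
    norm_num
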